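/- arXiv:1011.6083 — 4 statements merged into one kernel-verified Lean document; each statement's English description precedes it below -/
import Mathlib

section
/- For every n ≥ 1, if the binary expansion of n is n = Σ_{i=1}^{m} 2^{k_i} with distinct exponents k_i, then c(n) = Π_{i=1}^{m} F(k_i), where F(k) = 2^{2^k} + 1 is the k-th Fermat number. In particular c(n) is a product of distinct Fermat numbers. -/
def c (n : Nat) : Nat := ∑ i ∈ Finset.range (n+1), (Nat.choose n i % 2) * 2^i

def F (k : Nat) : Nat := 2^(2^k) + 1

/-!
Modulo a prime `p`, `(X + 1) ^ (p ^ m + r) = (X + 1) ^ r + X ^ (p ^ m) * (X + 1) ^ r`.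
For `p = 2` and `r < 2 ^ m` the two summands have disjoint supports, so the parities of the
binomial coefficients of `2 ^ m + r` are those of `r`, once unshifted and once shifted by `2 ^ m`.
Hence the generating sum `∑ (choose n i % 2) x ^ i` gains the factor `x ^ (2 ^ m) + 1` for every
binary digit `2 ^ m` of `n`; at `x = 2` these factors are the Fermat numbers.
-/

open Finset Polynomial

namespace Nat

theorem cast_choose_prime_pow_add {p : ℕ} [Fact p.Prime] (m r i : ℕ) :
    ((choose (p ^ m + r) i : ℕ) : ZMod p) =
      choose r i + if p ^ m ≤ i then (choose r (i - p ^ m) : ZMod p) else 0 := by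
  have hpow : (X + 1 : (ZMod p)[X]) ^ (p ^ m + r) =
      (X + 1) ^ r + X ^ (p ^ m) * (X + 1) ^ r := by
    rw [pow_add, add_pow_char_pow, one_pow]
    ring
  rw [← coeff_X_add_one_pow, hpow, coeff_add, coeff_X_pow_mul', coeff_X_add_one_pow,
    coeff_X_add_one_pow]

theorem choose_prime_pow_add_mod_of_lt {p : ℕ} (hp : p.Prime) {m r i : ℕ} (hi : i < p ^ m) :
    choose (p ^ m + r) i % p = choose r i % p := by
  have := Fact.mk hp
  have h := cast_choose_prime_pow_add m r i (p := p)
  rw [if_neg hi.not_ge, add_zero] at h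
  exact (ZMod.natCast_eq_natCast_iff' _ _ p).mp h

theorem choose_prime_pow_add_prime_pow_add_mod {p : ℕ} (hp : p.Prime) {m r : ℕ} (hr : r < p ^ m)
    (i : ℕ) : choose (p ^ m + r) (p ^ m + i) % p = choose r i % p := by
  have := Fact.mk hp
  have h := cast_choose_prime_pow_add m r (p ^ m + i) (p := p)
  rw [if_pos (le_add_right _ _), choose_eq_zero_of_lt (show r < p ^ m + i by omega),
    Nat.add_sub_cancel_left, cast_zero, zero_add] at h
  exact (ZMod.natCast_eq_natCast_iff' _ _ p).mp h

end Nat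

section BinomialParitySum

variable {R : Type*} [CommSemiring R] (x : R)

def binomialParitySum (n : ℕ) : R :=
  ∑ i ∈ range (n + 1), ((n.choose i % 2 : ℕ) : R) * x ^ i

theorem binomialParitySum_eq_sum_range {n N : ℕ} (h : n < N) :
    binomialParitySum x n = ∑ i ∈ range N, ((n.choose i % 2 : ℕ) : R) * x ^ i := by
  refine sum_subset (range_subset_range.mpr h) fun i _ hi => ?_
  rw [Nat.choose_eq_zero_of_lt (by simpa using hi)]
  simp

theorem binomialParitySum_two_pow_add {m r : ℕ} (hr : r < 2 ^ m) :
    binomialParitySum x (2 ^ m + r) = (x ^ 2 ^ m + 1) * binomialParitySum x r := by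
  have hlow : ∀ i ∈ range (2 ^ m), ((Nat.choose (2 ^ m + r) i % 2 : ℕ) : R) * x ^ i =
      ((r.choose i % 2 : ℕ) : R) * x ^ i := fun i hi => by
    rw [Nat.choose_prime_pow_add_mod_of_lt Nat.prime_two (mem_range.mp hi)]
  have hhigh : ∀ i ∈ range (2 ^ m),
      ((Nat.choose (2 ^ m + r) (2 ^ m + i) % 2 : ℕ) : R) * x ^ (2 ^ m + i) =
        x ^ 2 ^ m * (((r.choose i % 2 : ℕ) : R) * x ^ i) := fun i _ => by
    rw [Nat.choose_prime_pow_add_prime_pow_add_mod Nat.prime_two hr, pow_add]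
    ring
  rw [binomialParitySum_eq_sum_range x (show 2 ^ m + r < 2 ^ m + 2 ^ m by omega), sum_range_add,
    sum_congr rfl hlow, sum_congr rfl hhigh, ← mul_sum,
    ← binomialParitySum_eq_sum_range x hr]
  ring

theorem binomialParitySum_sum_two_pow (S : Finset ℕ) :
    binomialParitySum x (∑ k ∈ S, 2 ^ k) = ∏ k ∈ S, (x ^ 2 ^ k + 1) := by
  induction S using Finset.induction_on_max with
  | empty => simp [binomialParitySum]
  | insert a S ha ih =>
    have haS : a ∉ S := fun h => (ha a h).false
    rw [sum_insert haS, prod_insert haS,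
      binomialParitySum_two_pow_add x (Nat.geomSum_lt le_rfl ha), ih]

end BinomialParitySum

theorem stmt1_general (n : Nat) (S : Finset Nat) (hS : n = ∑ k ∈ S, 2^k) :
    c n = ∏ k ∈ S, F k := by
  subst hS
  -- definitional: the cast `ℕ → ℕ` in `binomialParitySum` is the identity
  exact binomialParitySum_sum_two_pow 2 S

theorem stmt1 (n : Nat) (hn : 1 ≤ n) (S : Finset Nat) (hS : n = ∑ k ∈ S, 2^k) :
    c n = ∏ k ∈ S, F k :=
  stmt1_general n S hS
end

section
/- If n₁ and n₂ are nonnegative integers whose binary expansions have no common 1-bit positions (i.e., n₁ AND n₂ = 0 in binary), then c(n₁ + n₂) = c(n₁) · c(n₂). -/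
def g (x n : Nat) : Nat := ∑ i ∈ Finset.range (n+1), (Nat.choose n i % 2) * x^i

lemma g_extend (x n N : Nat) (hN : n + 1 ≤ N) :
    g x n = ∑ i ∈ Finset.range N, (Nat.choose n i % 2) * x^i := by
  rw [g]
  apply Finset.sum_subset (Finset.range_subset_range.mpr hN)
  intro i _ hi
  simp only [Finset.mem_range, not_lt] at hi
  rw [Nat.choose_eq_zero_of_lt (by omega)]
  simp

lemma sum_range_two_mul (f : ℕ → ℕ) (M : ℕ) :
    ∑ i ∈ Finset.range (2*M), f i = ∑ j ∈ Finset.range M, (f (2*j) + f (2*j+1)) := by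
  induction M with
  | zero => simp
  | succ M ih =>
    rw [Finset.sum_range_succ, ← ih, Nat.mul_succ,
      show 2*M+2 = (2*M+1)+1 from rfl, Finset.sum_range_succ, Finset.sum_range_succ]
    omega

lemma choose_mod_two (n k : ℕ) :
    Nat.choose n k % 2 = (Nat.choose (n%2) (k%2) * Nat.choose (n/2) (k/2)) % 2 := by
  haveI : Fact (Nat.Prime 2) := ⟨Nat.prime_two⟩
  exact Choose.choose_modEq_choose_mod_mul_choose_div_nat (p := 2)

lemma g_rec (x n : Nat) : g x n = (1 + (n % 2) * x) * g (x^2) (n / 2) := by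
  have h1 : g x n = ∑ i ∈ Finset.range (2*(n/2+1)), (Nat.choose n i % 2) * x^i :=
    g_extend x n _ (by omega)
  rw [h1, sum_range_two_mul, g, Finset.mul_sum]
  apply Finset.sum_congr rfl
  intro j _
  have heven : Nat.choose n (2*j) % 2 = Nat.choose (n/2) j % 2 := by
    rw [choose_mod_two]
    simp [Nat.mul_div_cancel_left, Nat.mul_mod_right]
  have hodd : Nat.choose n (2*j+1) % 2 = (n % 2) * (Nat.choose (n/2) j % 2) := by
    rw [choose_mod_two]
    have h2 : (2*j+1) % 2 = 1 := by omega
    have h3 : (2*j+1) / 2 = j := by omega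
    rw [h2, h3, Nat.choose_one_right]
    rcases Nat.mod_two_eq_zero_or_one n with h | h <;> rw [h]
    · simp
    · simp [Nat.mul_mod, Nat.mod_mod_of_dvd]
  rw [heven, hodd]
  have hx : x^(2*j) = (x^2)^j := by rw [← pow_mul]
  have hx' : x^(2*j+1) = (x^2)^j * x := by rw [pow_succ, ← pow_mul]
  rw [hx, hx']
  ring

lemma g_mul (m : ℕ) : ∀ n₁ n₂ x : ℕ, n₁ + n₂ ≤ m → n₁ &&& n₂ = 0 →
    g x (n₁ + n₂) = g x n₁ * g x n₂ := by
  induction m with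
  | zero =>
    intro n₁ n₂ x hle _
    have h1 : n₁ = 0 := by omega
    have h2 : n₂ = 0 := by omega
    subst h1; subst h2; simp [g]
  | succ m ih =>
    intro n₁ n₂ x hle h
    rcases Nat.eq_zero_or_pos (n₁ + n₂) with h0 | hpos
    · have h1 : n₁ = 0 := by omega
      have h2 : n₂ = 0 := by omega
      subst h1; subst h2; simp [g]
    · have hbit : n₁ % 2 = 0 ∨ n₂ % 2 = 0 := by
        by_contra hc
        push_neg at hc
        have h1 : n₁ % 2 = 1 := by omega
        have h2 : n₂ % 2 = 1 := by omega
        have ht : Nat.testBit (n₁ &&& n₂) 0 = true := by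
          rw [Nat.testBit_and]
          simp [h1, h2]
        rw [h] at ht
        simp at ht
      have hdiv : (n₁ / 2) &&& (n₂ / 2) = 0 := by
        apply Nat.eq_of_testBit_eq
        intro i
        have := congrArg (fun t => Nat.testBit t (i+1)) h
        simp only [Nat.testBit_and, Nat.zero_testBit] at this ⊢
        simpa [Nat.testBit_div_two] using this
      have hmod : (n₁ + n₂) % 2 = n₁ % 2 + n₂ % 2 := by
        rcases hbit with hb | hb <;> omega
      have hdiv2 : (n₁ + n₂) / 2 = n₁ / 2 + n₂ / 2 := by
        rcases hbit with hb | hb <;> omega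
      have hle' : n₁ / 2 + n₂ / 2 ≤ m := by omega
      rw [g_rec, hmod, hdiv2, ih _ _ _ hle' hdiv, g_rec x n₁, g_rec x n₂]
      rcases hbit with hb | hb <;> rw [hb] <;> ring

theorem stmt7 (n₁ n₂ : Nat) (h : n₁ &&& n₂ = 0) : c (n₁ + n₂) = c n₁ * c n₂ := by
  have : ∀ n, c n = g 2 n := fun n => rfl
  rw [this, this, this]
  exact g_mul (n₁ + n₂) n₁ n₂ 2 le_rfl h
end

section
/- For all n ≥ 0 and t ≥ 1, (F(t−1) − 2) · c(2^t n) = c(2^t n + 2^{t−1} − 1). -/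
def d (q n : Nat) : Nat := ∑ i ∈ Finset.range (n+1), (Nat.choose n i % 2) * q^i

lemma pair_sum (f : ℕ → ℕ) (n : ℕ) :
    ∑ i ∈ Finset.range (2*n), f i = ∑ j ∈ Finset.range n, (f (2*j) + f (2*j+1)) := by
  induction n with
  | zero => simp
  | succ n ih =>
      have h : 2 * (n+1) = (2*n + 1) + 1 := by ring
      rw [h, Finset.sum_range_succ, Finset.sum_range_succ, ih, Finset.sum_range_succ]
      omega

lemma choose_par (m k : ℕ) :
    Nat.choose m k % 2 = (Nat.choose (m % 2) (k % 2) * Nat.choose (m / 2) (k / 2)) % 2 :=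
  Choose.choose_modEq_choose_mod_mul_choose_div_nat (p := 2)

lemma choose_ee (n j : ℕ) : Nat.choose (2*n) (2*j) % 2 = Nat.choose n j % 2 := by
  rw [choose_par]
  simp [Nat.mul_mod_right, Nat.mul_div_cancel_left]

lemma choose_eo (n j : ℕ) : Nat.choose (2*n) (2*j+1) % 2 = 0 := by
  rw [choose_par]
  simp [Nat.mul_mod_right, Nat.mul_add_mod]

lemma choose_oe (n j : ℕ) : Nat.choose (2*n+1) (2*j) % 2 = Nat.choose n j % 2 := by
  rw [choose_par]
  simp [Nat.mul_add_mod, Nat.mul_mod_right, Nat.mul_add_div]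

lemma choose_oo (n j : ℕ) : Nat.choose (2*n+1) (2*j+1) % 2 = Nat.choose n j % 2 := by
  rw [choose_par]
  simp [Nat.mul_add_mod, Nat.mul_add_div]

lemma d_even (q n : ℕ) : d q (2*n) = d (q^2) n := by
  unfold d
  rw [Finset.sum_range_succ, pair_sum, Finset.sum_range_succ]
  congr 1
  · apply Finset.sum_congr rfl
    intro j _
    rw [choose_ee, choose_eo, pow_mul]
    ring
  · rw [Nat.choose_self, Nat.choose_self, pow_mul]

lemma d_odd (q n : ℕ) : d q (2*n+1) = (1+q) * d (q^2) n := by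
  unfold d
  have h : 2*n+1+1 = 2*(n+1) := by ring
  rw [h, pair_sum, Finset.mul_sum]
  apply Finset.sum_congr rfl
  intro j _
  rw [choose_oe, choose_oo, pow_mul, pow_succ]
  ring

lemma geom_pair (q k : ℕ) :
    ∑ i ∈ Finset.range (2*k), q^i = (1+q) * ∑ i ∈ Finset.range k, (q^2)^i := by
  rw [pair_sum, Finset.mul_sum]
  apply Finset.sum_congr rfl
  intro j _
  rw [pow_mul, pow_succ]
  ring

lemma d_pow (q n t : ℕ) : d q (2^t * n) = d (q^(2^t)) n := by
  induction t generalizing q with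
  | zero => simp
  | succ t ih =>
      have h : 2^(t+1) * n = 2 * (2^t * n) := by ring
      rw [h, d_even, ih, ← pow_mul]
      congr 1
      rw [pow_succ]
      ring

lemma key (s : ℕ) : ∀ q n : ℕ, d q (2^(s+1) * n + 2^s - 1) =
    (∑ i ∈ Finset.range (2^s), q^i) * d (q^(2^(s+1))) n := by
  induction s with
  | zero =>
      intro q n
      simp only [pow_zero, pow_one]
      have h : 2^1 * n + 1 - 1 = 2 * n := by omega
      rw [h, d_even]
      simp
  | succ s ih =>
      intro q n
      have hpos : 1 ≤ 2^s := Nat.one_le_two_pow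
      have h : 2^(s+2) * n + 2^(s+1) - 1 = 2 * (2^(s+1) * n + 2^s - 1) + 1 := by
        have h1 : 2^(s+1) = 2 * 2^s := by ring
        have hn : 2^(s+2) * n = 2 * (2^(s+1) * n) := by ring
        omega
      rw [h, d_odd, ih, ← mul_assoc, ← geom_pair, ← pow_mul]
      have h2 : 2 * 2^s = 2^(s+1) := by ring
      have h3 : 2 * 2^(s+1) = 2^(s+2) := by ring
      rw [h2, h3]

lemma two_pow_sum (k : ℕ) : ∑ i ∈ Finset.range k, 2^i = 2^k - 1 := by
  induction k with
  | zero => simp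
  | succ k ih =>
      have : 1 ≤ 2^k := Nat.one_le_two_pow
      rw [Finset.sum_range_succ, ih, pow_succ]
      omega

theorem stmt9 (n t : Nat) (ht : 1 ≤ t) :
    (F (t-1) - 2) * c (2^t * n) = c (2^t * n + 2^(t-1) - 1) := by
  obtain ⟨s, rfl⟩ : ∃ s, t = s + 1 := ⟨t - 1, by omega⟩
  have hc : ∀ m, c m = d 2 m := fun m => rfl
  simp only [Nat.add_sub_cancel, hc]
  rw [key s 2 n, d_pow, two_pow_sum]
  have : F s - 2 = 2^(2^s) - 1 := by
    unfold F
    omega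
  rw [this]
end

section
/- For every t ≥ 2, with l(n) = (c(2n) − 1)/4, the limit as n → ∞ of l(2^{t−1} n + 2^{t−2}) / l(2^{t−1} n + 2^{t−2} − 1) equals 3·F(t−1)/(F(t−1) − 2). -/
noncomputable def l (n : Nat) : ℝ := ((c (2*n) : ℝ) - 1) / 4

/-! By Lucas' theorem, the binary digits of `2 ^ k * a + b` with `b < 2 ^ k` split into those of
`a` and those of `b`, whence `c (2 ^ k * a + b) = c (2 ^ k * a) * c b`. Writing `m = 2 ^ (t-2)`,
the arguments of `c` in the two values of `l` are `2 ^ t * n + 2m` and `2 ^ t * n + 2m - 2`, so the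
ratio is `(y * c (2m) - 1) / (y * c (2m - 2) - 1)` with `y = c (2 ^ t * n) → ∞`, and tends to
`c (2m) / c (2m - 2)`. The same factorisation gives `c (2 ^ j) = F j` and, inductively,
`3 * c (2 ^ j - 2) + 1 = 2 ^ 2 ^ j = F j - 1`. -/

open Finset Filter Topology

namespace Nat

theorem mod_pow_div_pow_mod_of_lt {p j k : ℕ} (n : ℕ) (hjk : j < k) :
    n % p ^ k / p ^ j % p = n / p ^ j % p := by
  obtain ⟨d, rfl⟩ := Nat.exists_eq_add_of_lt hjk
  rw [add_assoc, pow_add, Nat.mod_mul_right_div_self,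
    Nat.mod_mod_of_dvd _ (dvd_pow_self p d.succ_ne_zero)]

theorem choose_modEq_choose_div_pow_mul_choose_mod_pow {p : ℕ} [Fact p.Prime] (k n i : ℕ) :
    n.choose i ≡ (n / p ^ k).choose (i / p ^ k) * (n % p ^ k).choose (i % p ^ k) [MOD p] := by
  have hp : 0 < p ^ k := pow_pos (Fact.out : p.Prime).pos k
  have high : n.choose i ≡ (n / p ^ k).choose (i / p ^ k) *
      ∏ j ∈ range k, (n / p ^ j % p).choose (i / p ^ j % p) [MOD p] := by
    rw [← Int.natCast_modEq_iff]
    exact_mod_cast Choose.choose_modEq_choose_mul_prod_range_choose k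
  have low := Choose.choose_modEq_prod_range_choose_nat (Nat.mod_lt n hp) (Nat.mod_lt i hp)
  rw [prod_congr rfl fun j hj => by
    rw [mod_pow_div_pow_mod_of_lt n (mem_range.mp hj),
      mod_pow_div_pow_mod_of_lt i (mem_range.mp hj)]] at low
  exact high.trans (low.symm.mul_left _)

theorem choose_mod_two_eq_mul (k n i : ℕ) :
    n.choose i % 2 =
      (n / 2 ^ k).choose (i / 2 ^ k) % 2 * ((n % 2 ^ k).choose (i % 2 ^ k) % 2) := by
  rw [choose_modEq_choose_div_pow_mul_choose_mod_pow k n i, Nat.mul_mod]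
  rcases Nat.mod_two_eq_zero_or_one ((n / 2 ^ k).choose (i / 2 ^ k)) with h | h <;>
    rcases Nat.mod_two_eq_zero_or_one ((n % 2 ^ k).choose (i % 2 ^ k)) with h' | h' <;>
    simp [h, h']

end Nat

theorem Finset.sum_range_mul_eq_sum_sum {M : Type*} [AddCommMonoid M] (B A : ℕ) (f : ℕ → M) :
    ∑ i ∈ range (B * A), f i = ∑ q ∈ range A, ∑ r ∈ range B, f (B * q + r) := by
  induction A with
  | zero => simp
  | succ A ih => rw [Nat.mul_succ, sum_range_add, ih, sum_range_succ]

theorem c_eq_sum_range {n N : ℕ} (h : n < N) :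
    c n = ∑ i ∈ range N, n.choose i % 2 * 2 ^ i := by
  refine sum_subset (range_subset_range.mpr h) fun i _ hi => ?_
  rw [Nat.choose_eq_zero_of_lt (by simpa using hi)]
  simp

theorem c_two_pow_mul_add {k b : ℕ} (a : ℕ) (hb : b < 2 ^ k) :
    c (2 ^ k * a + b) = (∑ q ∈ range (a + 1), a.choose q % 2 * (2 ^ 2 ^ k) ^ q) * c b := by
  have hk : 0 < 2 ^ k := by positivity
  rw [c_eq_sum_range (N := 2 ^ k * (a + 1)) (by nlinarith), sum_range_mul_eq_sum_sum,
    c_eq_sum_range hb, sum_mul_sum]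
  refine sum_congr rfl fun q _ => sum_congr rfl fun r hr => ?_
  have hr : r < 2 ^ k := mem_range.mp hr
  rw [Nat.choose_mod_two_eq_mul k, Nat.mul_add_div hk, Nat.mul_add_div hk, Nat.mul_add_mod,
    Nat.mul_add_mod, Nat.div_eq_of_lt hb, Nat.div_eq_of_lt hr, Nat.mod_eq_of_lt hb,
    Nat.mod_eq_of_lt hr, add_zero, add_zero, pow_add, pow_mul]
  ring

theorem c_zero : c 0 = 1 := rfl

theorem c_two_pow_mul (k a : ℕ) :
    c (2 ^ k * a) = ∑ q ∈ range (a + 1), a.choose q % 2 * (2 ^ 2 ^ k) ^ q := by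
  simpa [c_zero] using c_two_pow_mul_add (k := k) a (pow_pos two_pos k)

theorem c_two_pow_mul_add_eq_mul {k b : ℕ} (a : ℕ) (hb : b < 2 ^ k) :
    c (2 ^ k * a + b) = c (2 ^ k * a) * c b := by
  rw [c_two_pow_mul_add a hb, c_two_pow_mul]

theorem c_two_pow (k : ℕ) : c (2 ^ k) = F k := by
  simpa [sum_range_succ, F, add_comm] using c_two_pow_mul k 1

theorem three_mul_c_two_pow_sub_two_add_one (k : ℕ) :
    3 * c (2 ^ (k + 1) - 2) + 1 = 2 ^ 2 ^ (k + 1) := by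
  induction k with
  | zero => rfl
  | succ k ih =>
    have hk : 2 ≤ 2 ^ (k + 1) := Nat.le_self_pow (by omega) 2
    have split : 2 ^ (k + 2) - 2 = 2 ^ (k + 1) * 1 + (2 ^ (k + 1) - 2) := by
      rw [pow_succ 2 (k + 1)]; omega
    rw [split, c_two_pow_mul_add_eq_mul 1 (by omega), mul_one, c_two_pow, F,
      pow_succ 2 (k + 1), pow_mul, ← ih]
    ring

theorem pow_two_le_c (n : ℕ) : 2 ^ n ≤ c n := by
  simpa [c] using single_le_sum (f := fun i => n.choose i % 2 * 2 ^ i)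
    (fun i _ => Nat.zero_le _) (self_mem_range_succ n)

theorem tendsto_c_two_pow_mul (k : ℕ) : Tendsto (fun n => c (2 ^ k * n)) atTop atTop :=
  tendsto_atTop_mono (fun n => (Nat.lt_two_pow_self.le.trans
    (Nat.pow_le_pow_right two_pos (Nat.le_mul_of_pos_left n (by positivity)))).trans
    (pow_two_le_c _)) tendsto_id

theorem tendsto_mul_sub_one_div_mul_sub_one {α : Type*} {f : Filter α} {u : α → ℝ} (A : ℝ)
    {B : ℝ} (hB : B ≠ 0) (hu : Tendsto u f atTop) :
    Tendsto (fun x => (u x * A - 1) / (u x * B - 1)) f (𝓝 (A / B)) := by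
  have hlim : Tendsto (fun x => (A - (u x)⁻¹) / (B - (u x)⁻¹)) f (𝓝 (A / B)) := by
    have h := (tendsto_const_nhds (x := A)).sub hu.inv_tendsto_atTop |>.div
      ((tendsto_const_nhds (x := B)).sub hu.inv_tendsto_atTop) (by simpa using hB)
    rwa [sub_zero, sub_zero] at h
  refine hlim.congr' ?_
  filter_upwards [hu.eventually_gt_atTop 0] with x hx
  have hx : u x ≠ 0 := hx.ne'
  field_simp

theorem tendsto_c_two_pow_mul_add_div {k a b : ℕ} (ha : a < 2 ^ k) (hb : b < 2 ^ k) :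
    Tendsto (fun n => ((c (2 ^ k * n + a) : ℝ) - 1) / ((c (2 ^ k * n + b) : ℝ) - 1))
      atTop (𝓝 (c a / c b)) := by
  have hcb : (c b : ℝ) ≠ 0 :=
    Nat.cast_ne_zero.mpr (Nat.one_le_iff_ne_zero.mp (Nat.one_le_two_pow.trans (pow_two_le_c b)))
  simpa only [c_two_pow_mul_add_eq_mul _ ha, c_two_pow_mul_add_eq_mul _ hb, Nat.cast_mul] using
    tendsto_mul_sub_one_div_mul_sub_one (c a : ℝ) hcb
      (tendsto_natCast_atTop_iff.mpr (tendsto_c_two_pow_mul k))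

theorem stmt14 (t : Nat) (ht : 2 ≤ t) :
    Filter.Tendsto (fun n : Nat => l (2^(t-1)*n + 2^(t-2)) / l (2^(t-1)*n + 2^(t-2) - 1))
      Filter.atTop (nhds (3 * (F (t-1) : ℝ) / ((F (t-1) : ℝ) - 2))) := by
  obtain ⟨s, rfl⟩ : ∃ s, t = s + 2 := ⟨t - 2, by omega⟩
  simp only [Nat.add_sub_cancel, Nat.add_succ_sub_one]
  have hs : 1 ≤ 2 ^ s := Nat.one_le_two_pow
  have hlim := tendsto_c_two_pow_mul_add_div (k := s + 2) (a := 2 ^ (s + 1))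
    (b := 2 ^ (s + 1) - 2) (by rw [pow_succ 2 (s + 1)]; omega) (by rw [pow_succ 2 (s + 1)]; omega)
  have hval : (c (2 ^ (s + 1)) : ℝ) / c (2 ^ (s + 1) - 2) = 3 * F (s + 1) / (F (s + 1) - 2) := by
    have hD : 3 * (c (2 ^ (s + 1) - 2) : ℝ) + 1 = 2 ^ 2 ^ (s + 1) := by
      exact_mod_cast three_mul_c_two_pow_sub_two_add_one s
    rw [c_two_pow, F]
    push_cast
    rw [← hD]
    field_simp
    ring
  rw [← hval]
  refine hlim.congr fun n => ?_
  have e1 : 2 * (2 ^ (s + 1) * n + 2 ^ s) = 2 ^ (s + 2) * n + 2 ^ (s + 1) := by ring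
  have e2 : 2 * (2 ^ (s + 1) * n + 2 ^ s - 1) = 2 ^ (s + 2) * n + (2 ^ (s + 1) - 2) := by
    rw [Nat.mul_sub, e1, pow_succ 2 s]; omega
  rw [l, l, e1, e2, div_div_div_cancel_right₀ four_ne_zero]
end
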